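/- Let (T(t))_{t≥0} be a strongly continuous semigroup of bounded linear operators on a complex Banach space X with ‖T(t)‖ ≤ Ne^{ωt}. Then every almost periodic function g: ℝ → X belongs to the set of strong continuity of the associated evolution semigroup: sup_{t∈ℝ} ‖T(h)g(t−h) − g(t)‖ → 0 as h → 0⁺. -/
import Mathlib


open Set MeasureTheory intervalIntegral
open scoped BoundedContinuousFunction ZeroAtInfty

noncomputable section

/-- A function `g : ℝ → X` is almost periodic in Bohr's sense: it is continuous and,
for every `ε > 0`, the set of its `ε`-periods is relatively dense in `ℝ`. -/
def AlmostPeriodic {E : Type*} [NormedAddCommGroup E] (g : ℝ → E) : Prop :=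
  Continuous g ∧ ∀ ε : ℝ, 0 < ε → ∃ l : ℝ, 0 < l ∧ ∀ a : ℝ,
    ∃ τ ∈ Set.Icc a (a + l), ∀ t : ℝ, ‖g (t + τ) - g t‖ ≤ ε

/-- `T` is a strongly continuous semigroup of bounded linear operators with
`‖T t‖ ≤ N * exp (ω * t)`. -/
def IsC0Semigroup {X : Type*} [NormedAddCommGroup X] [NormedSpace ℂ X]
    (T : ℝ → X →L[ℂ] X) (N ω : ℝ) : Prop :=
  T 0 = 1 ∧ (∀ a b : ℝ, 0 ≤ a → 0 ≤ b → T (a + b) = (T a).comp (T b)) ∧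
    (∀ x : X, ContinuousOn (fun t : ℝ => T t x) (Set.Ici (0:ℝ))) ∧
    0 < N ∧ 0 < ω ∧ ∀ t : ℝ, 0 ≤ t → ‖T t‖ ≤ N * Real.exp (ω * t)

/-- An almost periodic function is uniformly continuous. -/
lemma ap_uniformContinuous {E : Type*} [NormedAddCommGroup E] (g : ℝ → E)
    (hg : AlmostPeriodic g) (ε : ℝ) (hε : 0 < ε) :
    ∃ δ : ℝ, 0 < δ ∧ ∀ t t' : ℝ, |t - t'| ≤ δ → ‖g t - g t'‖ ≤ ε := by
  obtain ⟨hc, hap⟩ := hg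
  obtain ⟨l, hl, hτ⟩ := hap (ε/3) (by positivity)
  have huc : UniformContinuousOn g (Icc (-1 : ℝ) (l+1)) :=
    isCompact_Icc.uniformContinuousOn_of_continuous hc.continuousOn
  rw [Metric.uniformContinuousOn_iff] at huc
  obtain ⟨δ, hδ, hδ'⟩ := huc (ε/3) (by positivity)
  refine ⟨min (δ/2) 1, by positivity, ?_⟩
  intro t t' htt
  obtain ⟨τ, hτmem, hτp⟩ := hτ (-t)
  have h1a : (0:ℝ) ≤ t + τ := by have := hτmem.1; linarith
  have h1b : t + τ ≤ l := by have := hτmem.2; linarith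
  have habs := abs_le.mp (le_trans htt (min_le_right _ _))
  have h3 : t + τ ∈ Icc (-1:ℝ) (l+1) := ⟨by linarith, by linarith⟩
  have h2 : t' + τ ∈ Icc (-1 : ℝ) (l+1) :=
    ⟨by linarith [habs.1, habs.2], by linarith [habs.1, habs.2]⟩
  have hd : dist (t+τ) (t'+τ) < δ := by
    rw [Real.dist_eq]
    have he : t + τ - (t' + τ) = t - t' := by ring
    rw [he]
    calc |t - t'| ≤ min (δ/2) 1 := htt
      _ ≤ δ/2 := min_le_left _ _
      _ < δ := by linarith
  have hmid : ‖g (t+τ) - g (t'+τ)‖ < ε/3 := by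
    rw [← dist_eq_norm]; exact hδ' _ h3 _ h2 hd
  have e1 : ‖g t - g (t+τ)‖ ≤ ε/3 := by rw [norm_sub_rev]; exact hτp t
  have e3 : ‖g (t'+τ) - g t'‖ ≤ ε/3 := hτp t'
  have hdecomp : g t - g t' = (g t - g (t+τ)) + (g (t+τ) - g (t'+τ)) + (g (t'+τ) - g t') := by
    abel
  calc ‖g t - g t'‖
      = ‖(g t - g (t+τ)) + (g (t+τ) - g (t'+τ)) + (g (t'+τ) - g t')‖ := by rw [hdecomp]
    _ ≤ ‖g t - g (t+τ)‖ + ‖g (t+τ) - g (t'+τ)‖ + ‖g (t'+τ) - g t'‖ := norm_add₃_le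
    _ ≤ ε := by linarith

/-- The range of an almost periodic function is totally bounded. -/
lemma ap_totallyBounded {E : Type*} [NormedAddCommGroup E] (g : ℝ → E)
    (hg : AlmostPeriodic g) : TotallyBounded (Set.range g) := by
  rw [Metric.totallyBounded_iff]
  intro ε hε
  obtain ⟨l, hl, hτ⟩ := hg.2 (ε/2) (by positivity)
  have hK : IsCompact (g '' Icc 0 l) := isCompact_Icc.image hg.1
  obtain ⟨t, htfin, htcov⟩ := Metric.totallyBounded_iff.mp hK.totallyBounded (ε/2) (by positivity)
  refine ⟨t, htfin, ?_⟩
  rintro x ⟨s, rfl⟩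
  obtain ⟨τ, hτmem, hτp⟩ := hτ (-s)
  have h1 : s + τ ∈ Icc (0:ℝ) l := ⟨by have := hτmem.1; linarith, by have := hτmem.2; linarith⟩
  have h2 : g (s+τ) ∈ ⋃ y ∈ t, Metric.ball y (ε/2) := htcov ⟨s+τ, h1, rfl⟩
  simp only [Set.mem_iUnion] at h2 ⊢
  obtain ⟨y, hy, hball⟩ := h2
  rw [Metric.mem_ball] at hball
  refine ⟨y, hy, ?_⟩
  rw [Metric.mem_ball]
  have h3 : dist (g s) (g (s+τ)) ≤ ε/2 := by
    rw [dist_eq_norm, norm_sub_rev]; exact hτp s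
  calc dist (g s) y ≤ dist (g s) (g (s+τ)) + dist (g (s+τ)) y := dist_triangle _ _ _
    _ < ε := by linarith

/-- Uniform strong continuity of a `C₀`-semigroup on compact sets. -/
lemma c0_uniform_on_compact {X : Type*} [NormedAddCommGroup X] [NormedSpace ℂ X]
    (T : ℝ → X →L[ℂ] X) (N ω : ℝ) (hT : IsC0Semigroup T N ω)
    (K : Set X) (hK : IsCompact K) (ε : ℝ) (hε : 0 < ε) :
    ∃ δ : ℝ, 0 < δ ∧ δ ≤ 1 ∧ ∀ h : ℝ, 0 < h → h < δ → ∀ x ∈ K, ‖T h x - x‖ ≤ ε := by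
  obtain ⟨hT0, _, hTcont, hN, hω, hbound⟩ := hT
  have hMpos : 0 < N * Real.exp ω := by positivity
  set M := N * Real.exp ω + 1 with hM
  have hM1 : 1 ≤ M := by linarith
  have hMpos' : 0 < M := by linarith
  have hr : 0 < ε / (3 * M) := by positivity
  obtain ⟨s, hsfin, hscov⟩ := Metric.totallyBounded_iff.mp hK.totallyBounded _ hr
  have hev : ∀ᶠ h in nhdsWithin 0 (Ici (0:ℝ)), ∀ y ∈ s, ‖T h y - y‖ < ε/3 := by
    rw [hsfin.eventually_all]
    intro y hy
    have hc : ContinuousWithinAt (fun t : ℝ => T t y) (Ici (0:ℝ)) 0 :=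
      (hTcont y) 0 self_mem_Ici
    have htend : Filter.Tendsto (fun t : ℝ => T t y) (nhdsWithin 0 (Ici (0:ℝ))) (nhds y) := by
      have := hc.tendsto
      simpa [hT0] using this
    have := htend.eventually (Metric.ball_mem_nhds y (show (0:ℝ) < ε/3 by positivity))
    filter_upwards [this] with h hh
    rw [← dist_eq_norm]; exact hh
  rw [eventually_nhdsWithin_iff, Metric.eventually_nhds_iff] at hev
  obtain ⟨δ', hδ', hδ'p⟩ := hev
  refine ⟨min δ' 1, by positivity, min_le_right _ _, ?_⟩
  intro h hh0 hhδ x hx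
  have hh1 : h ≤ 1 := le_of_lt (lt_of_lt_of_le hhδ (min_le_right _ _))
  have hdist : dist h 0 < δ' := by
    rw [Real.dist_eq, sub_zero, abs_of_pos hh0]
    exact lt_of_lt_of_le hhδ (min_le_left _ _)
  have hys := hδ'p hdist (le_of_lt hh0)
  have hcov := hscov hx
  simp only [Set.mem_iUnion] at hcov
  obtain ⟨y, hy, hball⟩ := hcov
  rw [Metric.mem_ball] at hball
  have hxy : ‖x - y‖ ≤ ε / (3 * M) := by rw [← dist_eq_norm]; exact hball.le
  have hTnorm : ‖T h‖ ≤ M := by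
    calc ‖T h‖ ≤ N * Real.exp (ω * h) := hbound h hh0.le
      _ ≤ N * Real.exp ω := by
          apply mul_le_mul_of_nonneg_left _ hN.le
          exact Real.exp_le_exp.mpr (by nlinarith)
      _ ≤ M := by linarith
  have h1 : ‖(T h) (x - y)‖ ≤ M * (ε / (3 * M)) :=
    le_trans ((T h).le_opNorm _) (mul_le_mul hTnorm hxy (norm_nonneg _) hMpos'.le)
  have hMr : M * (ε / (3 * M)) = ε / 3 := by field_simp
  have hrle : ε / (3 * M) ≤ ε / 3 := by
    rw [div_le_div_iff₀ (by positivity) (by norm_num)]; nlinarith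
  have h2 : ‖(T h) y - y‖ ≤ ε/3 := (hys y hy).le
  have h3 : ‖y - x‖ ≤ ε / (3 * M) := by rw [norm_sub_rev]; exact hxy
  have hdecomp : (T h) x - x = (T h) (x - y) + ((T h) y - y) + (y - x) := by
    rw [map_sub]; abel
  calc ‖(T h) x - x‖ = ‖(T h) (x - y) + ((T h) y - y) + (y - x)‖ := by rw [hdecomp]
    _ ≤ ‖(T h) (x - y)‖ + ‖(T h) y - y‖ + ‖y - x‖ := norm_add₃_le
    _ ≤ ε := by linarith

/-- Every almost periodic function belongs to the set of strong continuity of the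
evolution semigroup associated with a `C₀`-semigroup:
`sup_t ‖T(h) g(t-h) - g(t)‖ → 0` as `h → 0⁺`. -/
theorem almostPeriodic_mem_strong_continuity_set {X : Type*} [NormedAddCommGroup X] [NormedSpace ℂ X] [CompleteSpace X]
    (T : ℝ → X →L[ℂ] X) (N ω : ℝ) (hT : IsC0Semigroup T N ω)
    (g : ℝ → X) (hg : AlmostPeriodic g) :
    ∀ ε : ℝ, 0 < ε → ∃ δ : ℝ, 0 < δ ∧ ∀ h : ℝ, 0 < h → h < δ →
      ∀ t : ℝ, ‖T h (g (t - h)) - g t‖ ≤ ε := by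
  intro ε hε
  obtain ⟨hT0, hTadd, hTcont, hN, hω, hbound⟩ := hT
  have hMpos : 0 < N * Real.exp ω := by positivity
  set M := N * Real.exp ω + 1 with hM
  have hMpos' : 0 < M := by linarith
  have hK : IsCompact (closure (Set.range g)) :=
    TotallyBounded.isCompact_of_isClosed (ap_totallyBounded g hg).closure isClosed_closure
  obtain ⟨δ₂, hδ₂pos, hδ₂le1, hδ₂⟩ :=
    c0_uniform_on_compact T N ω ⟨hT0, hTadd, hTcont, hN, hω, hbound⟩ _ hK (ε/2) (half_pos hε)
  obtain ⟨δ₁, hδ₁pos, hδ₁⟩ := ap_uniformContinuous g hg (ε/(2*M)) (by positivity)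
  refine ⟨min δ₁ δ₂, lt_min hδ₁pos hδ₂pos, ?_⟩
  intro h hh0 hhδ t
  have hhδ₁ : h ≤ δ₁ := le_of_lt (lt_of_lt_of_le hhδ (min_le_left _ _))
  have hhδ₂ : h < δ₂ := lt_of_lt_of_le hhδ (min_le_right _ _)
  have hh1 : h ≤ 1 := le_of_lt (lt_of_lt_of_le hhδ₂ hδ₂le1)
  have hug : ‖g (t - h) - g t‖ ≤ ε/(2*M) := by
    apply hδ₁
    rw [show t - h - t = -h by ring, abs_neg, abs_of_pos hh0]
    exact hhδ₁
  have hTnorm : ‖T h‖ ≤ M := by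
    calc ‖T h‖ ≤ N * Real.exp (ω * h) := hbound h hh0.le
      _ ≤ N * Real.exp ω := by
          apply mul_le_mul_of_nonneg_left _ hN.le
          exact Real.exp_le_exp.mpr (by nlinarith)
      _ ≤ M := by linarith
  have h1 : ‖(T h) (g (t - h) - g t)‖ ≤ M * (ε/(2*M)) :=
    le_trans ((T h).le_opNorm _) (mul_le_mul hTnorm hug (norm_nonneg _) hMpos'.le)
  have hMr : M * (ε/(2*M)) = ε/2 := by field_simp
  have h2 : ‖(T h) (g t) - g t‖ ≤ ε/2 :=
    hδ₂ h hh0 hhδ₂ (g t) (subset_closure (Set.mem_range_self t))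
  have hdecomp : (T h) (g (t - h)) - g t = (T h) (g (t - h) - g t) + ((T h) (g t) - g t) := by
    rw [map_sub]; abel
  calc ‖(T h) (g (t - h)) - g t‖
      = ‖(T h) (g (t - h) - g t) + ((T h) (g t) - g t)‖ := by rw [hdecomp]
    _ ≤ ‖(T h) (g (t - h) - g t)‖ + ‖(T h) (g t) - g t‖ := norm_add_le _ _
    _ ≤ ε := by linarith
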